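/- Let $(-,-)$ be the bilinear form on the Hecke algebra $H = H_q(n)$ over a field $K$ defined on the standard basis by $(T_u, T_v) = q^{\ell(u)}$ if $u = v$ and $0$ otherwise, where $q \in K^\times$. Define $f(h_1, h_2) := (h_1, h_2^*)$ where $*$ is the anti-automorphism with $T_w^* = T_{w^{-1}}$. Then $f$ is a symmetric associative non-degenerate bilinear form; in particular $H_q(n)$ is a symmetric algebra. -/

import Mathlib

/-!
Let `τ(h) := (h, T_1)` be the coefficient of `T_1`. Right multiplication by a generator acts
by `T_w T_s = T_{ws}` if `ℓ(ws) > ℓ(w)` and `T_w T_s = (q - 1) T_w + q T_{ws}` otherwise, so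
peeling left descents off `v` gives `τ(T_u T_v) = δ_{uv,1} q^{ℓ(u)}`. This is `(T_u, T_v^*)`,
hence `f(h₁, h₂) = τ(h₁ h₂)` by bilinearity, since the `T_w` span `H`. Associativity of `f` is
then that of the product, symmetry follows from `uv = 1 ↔ vu = 1` and `ℓ(u) = ℓ(u⁻¹)`, and
non-degeneracy from `(-,-)` being diagonal with invertible entries `q^{ℓ(w)}`.
-/

noncomputable section

open FreeAlgebra

/-- The Coxeter length of a permutation, i.e. its number of inversions. -/
def len {n : ℕ} (w : Equiv.Perm (Fin n)) : ℕ :=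
  (Finset.univ.filter (fun p : Fin n × Fin n => p.1 < p.2 ∧ w p.2 < w p.1)).card

/-- The defining relations of the Hecke algebra `H_q(n+1)` of type `Aₙ`: generators
`T i` for `i : Fin n`, braid relations, and quadratic relations
`Tᵢ² = (q-1)Tᵢ + q`. -/
inductive HeckeRel (K : Type) [Field K] (q : K) (n : ℕ) :
    FreeAlgebra K (Fin n) → FreeAlgebra K (Fin n) → Prop
  | braid (i j : Fin n) (h : (i : ℕ) + 1 = j) :
      HeckeRel K q n (ι K i * ι K j * ι K i) (ι K j * ι K i * ι K j)
  | comm (i j : Fin n) (h : (i : ℕ) + 2 ≤ j) :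
      HeckeRel K q n (ι K i * ι K j) (ι K j * ι K i)
  | quad (i : Fin n) :
      HeckeRel K q n (ι K i * ι K i)
        (algebraMap K (FreeAlgebra K (Fin n)) (q - 1) * ι K i +
          algebraMap K (FreeAlgebra K (Fin n)) q)

/-- The Iwahori–Hecke algebra `H_q(n+1)` of the symmetric group `S_{n+1}`. -/
abbrev Hecke (K : Type) [Field K] (q : K) (n : ℕ) := RingQuot (HeckeRel K q n)

/-- The generator `Tᵢ` of the Hecke algebra. -/
def Tgen (K : Type) [Field K] (q : K) (n : ℕ) (i : Fin n) : Hecke K q n :=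
  RingQuot.mkAlgHom K (HeckeRel K q n) (ι K i)

/-- The adjacent transposition `sᵢ = (i, i+1)` in `S_{n+1}`. -/
def sgen {n : ℕ} (i : Fin n) : Equiv.Perm (Fin (n + 1)) :=
  Equiv.swap i.castSucc i.succ

/-- The product `T_{i₁} ⋯ T_{i_k}` attached to a word `l = [i₁, …, i_k]`. -/
def wordProd (K : Type) [Field K] (q : K) (n : ℕ) (l : List (Fin n)) : Hecke K q n :=
  (l.map (Tgen K q n)).prod

/-- The permutation `s_{i₁} ⋯ s_{i_k}` attached to a word `l = [i₁, …, i_k]`. -/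
def wordPerm {n : ℕ} (l : List (Fin n)) : Equiv.Perm (Fin (n + 1)) :=
  (l.map sgen).prod

/-- `Tw` is the standard basis `{T_w : w ∈ S_{n+1}}` of the Hecke algebra:
`T_w = T_{i₁} ⋯ T_{i_k}` for any reduced word `w = s_{i₁} ⋯ s_{i_k}`. -/
def IsTBasis (K : Type) [Field K] (q : K) (n : ℕ)
    (Tw : Equiv.Perm (Fin (n + 1)) → Hecke K q n) : Prop :=
  ∀ (w : Equiv.Perm (Fin (n + 1))) (l : List (Fin n)),
    wordPerm l = w → l.length = len w → Tw w = wordProd K q n l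

section Perm

variable {n : ℕ}

lemma len_one : len (1 : Equiv.Perm (Fin n)) = 0 := by
  simp only [len, Equiv.Perm.one_apply]
  exact Finset.card_eq_zero.2 (Finset.filter_eq_empty_iff.2 fun _ _ h => h.1.asymm h.2)

lemma len_inv (w : Equiv.Perm (Fin n)) : len w⁻¹ = len w :=
  Finset.card_equiv ((Equiv.prodComm _ _).trans (w⁻¹.prodCongr w⁻¹)) (by simp [and_comm])

lemma len_eq_of_mul_eq_one {u v : Equiv.Perm (Fin n)} (h : u * v = 1) : len u = len v := by
  rw [eq_inv_of_mul_eq_one_left h, len_inv]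

lemma len_mul (w σ : Equiv.Perm (Fin n)) :
    len (w * σ) = (Finset.univ.filter
      (fun p : Fin n × Fin n => σ⁻¹ p.1 < σ⁻¹ p.2 ∧ w p.2 < w p.1)).card :=
  Finset.card_equiv (σ.prodCongr σ) fun p => by
    simp only [Finset.mem_filter, Finset.mem_univ, true_and]
    simp

@[simp]
lemma sgen_mul_self (i : Fin n) : sgen i * sgen i = 1 := Equiv.swap_mul_self _ _

@[simp]
lemma sgen_inv (i : Fin n) : (sgen i)⁻¹ = sgen i := Equiv.swap_inv _ _

lemma sgen_lt_sgen_iff {i : Fin n} {a b : Fin (n + 1)}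
    (h₁ : ¬(a = i.castSucc ∧ b = i.succ)) (h₂ : ¬(a = i.succ ∧ b = i.castSucc)) :
    sgen i a < sgen i b ↔ a < b := by
  simp only [sgen, Equiv.swap_apply_def]
  split_ifs <;> simp only [Fin.lt_def, Fin.ext_iff, Fin.val_succ, Fin.val_castSucc] at * <;> omega

/-- After reindexing by `sᵢ`, the inversions of `w sᵢ` are those of `w` and the pair `(i+1, i)`. -/
lemma len_mul_sgen_of_lt (w : Equiv.Perm (Fin (n + 1))) (i : Fin n)
    (h : w i.castSucc < w i.succ) : len (w * sgen i) = len w + 1 := by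
  have hlt : i.castSucc < i.succ := Fin.castSucc_lt_succ
  have hins : Finset.univ.filter (fun p : Fin (n + 1) × Fin (n + 1) =>
        (sgen i)⁻¹ p.1 < (sgen i)⁻¹ p.2 ∧ w p.2 < w p.1) =
      insert (i.succ, i.castSucc) (Finset.univ.filter
        (fun p : Fin (n + 1) × Fin (n + 1) => p.1 < p.2 ∧ w p.2 < w p.1)) := by
    ext ⟨a, b⟩
    simp only [sgen_inv, Finset.mem_filter, Finset.mem_univ, true_and, Finset.mem_insert,
      Prod.mk.injEq]
    by_cases h₂ : a = i.succ ∧ b = i.castSucc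
    · obtain ⟨rfl, rfl⟩ := h₂
      simp [sgen, h]
    by_cases h₁ : a = i.castSucc ∧ b = i.succ
    · obtain ⟨rfl, rfl⟩ := h₁
      simp [sgen, h.not_gt, hlt.ne]
    simp [sgen_lt_sgen_iff h₁ h₂, h₂]
  rw [len_mul, hins, Finset.card_insert_of_notMem (by simp [hlt.not_gt])]
  rfl

lemma len_mul_sgen_of_gt (w : Equiv.Perm (Fin (n + 1))) (i : Fin n)
    (h : w i.succ < w i.castSucc) : len w = len (w * sgen i) + 1 := by
  have := len_mul_sgen_of_lt (w * sgen i) i (by simpa [sgen] using h)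
  rwa [mul_assoc, sgen_mul_self, mul_one] at this

lemma len_mul_sgen_eq_or (w : Equiv.Perm (Fin (n + 1))) (i : Fin n) :
    len (w * sgen i) = len w + 1 ∨ len w = len (w * sgen i) + 1 := by
  rcases lt_or_gt_of_ne (w.injective.ne (Fin.castSucc_lt_succ (i := i)).ne) with h | h
  · exact .inl (len_mul_sgen_of_lt w i h)
  · exact .inr (len_mul_sgen_of_gt w i h)

lemma exists_right_descent {w : Equiv.Perm (Fin (n + 1))} (hw : w ≠ 1) :
    ∃ i : Fin n, len w = len (w * sgen i) + 1 := by
  suffices ∃ i : Fin n, w i.succ < w i.castSucc from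
    this.imp fun i => len_mul_sgen_of_gt w i
  by_contra! hasc
  have hmono : StrictMono w := Fin.strictMono_iff_lt_succ.2 fun i =>
    (hasc i).lt_of_ne (w.injective.ne (Fin.castSucc_lt_succ (i := i)).ne)
  exact hw (Equiv.ext fun _ => hmono.apply_eq)

lemma exists_left_descent {w : Equiv.Perm (Fin (n + 1))} (hw : w ≠ 1) :
    ∃ i : Fin n, len w = len (sgen i * w) + 1 := by
  obtain ⟨i, hi⟩ := exists_right_descent (inv_ne_one.2 hw)
  refine ⟨i, ?_⟩
  rwa [len_inv, ← len_inv (w⁻¹ * sgen i), mul_inv_rev, inv_inv, sgen_inv] at hi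

lemma exists_reduced_word (w : Equiv.Perm (Fin (n + 1))) :
    ∃ l : List (Fin n), wordPerm l = w ∧ l.length = len w := by
  induction h : len w using Nat.strong_induction_on generalizing w with
  | _ k ih =>
  subst h
  by_cases hw : w = 1
  · exact ⟨[], by simp [hw, wordPerm], by simp [hw, len_one]⟩
  obtain ⟨i, hi⟩ := exists_right_descent hw
  obtain ⟨l, hl, hlen⟩ := ih _ (by omega) (w * sgen i) rfl
  refine ⟨l ++ [i], ?_, by simp [hlen, hi]⟩
  rw [wordPerm, List.map_append, List.prod_append, ← wordPerm, hl]
  simp [mul_assoc]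

end Perm

section Hecke

variable {K : Type} [Field K] {q : K} {n : ℕ}

lemma Tgen_mul_self (i : Fin n) :
    Tgen K q n i * Tgen K q n i = (q - 1) • Tgen K q n i + q • 1 := by
  have h := RingQuot.mkAlgHom_rel K (HeckeRel.quad (K := K) (q := q) (n := n) i)
  simp only [map_mul, map_add, AlgHom.commutes] at h
  rw [Tgen, h, Algebra.smul_def, Algebra.smul_def, mul_one]

variable {Tw : Equiv.Perm (Fin (n + 1)) → Hecke K q n}

lemma IsTBasis.Tw_one (hTw : IsTBasis K q n Tw) : Tw 1 = 1 :=
  hTw 1 [] rfl (by simp [len_one])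

lemma IsTBasis.Tw_mul_Tgen_of_ascent (hTw : IsTBasis K q n Tw) {w : Equiv.Perm (Fin (n + 1))}
    {i : Fin n} (h : len (w * sgen i) = len w + 1) :
    Tw w * Tgen K q n i = Tw (w * sgen i) := by
  obtain ⟨l, hl, hlen⟩ := exists_reduced_word w
  rw [hTw w l hl hlen, hTw (w * sgen i) (l ++ [i]) (by simp [wordPerm, ← hl])
    (by simp [hlen, h])]
  simp [wordProd]

lemma IsTBasis.Tgen_mul_Tw_of_ascent (hTw : IsTBasis K q n Tw) {w : Equiv.Perm (Fin (n + 1))}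
    {i : Fin n} (h : len (sgen i * w) = len w + 1) :
    Tgen K q n i * Tw w = Tw (sgen i * w) := by
  obtain ⟨l, hl, hlen⟩ := exists_reduced_word w
  rw [hTw w l hl hlen, hTw (sgen i * w) (i :: l) (by simp [wordPerm, ← hl]) (by simp [hlen, h])]
  simp [wordProd]

lemma IsTBasis.Tw_mul_Tgen_of_descent (hTw : IsTBasis K q n Tw)
    {w : Equiv.Perm (Fin (n + 1))} {i : Fin n} (h : len w = len (w * sgen i) + 1) :
    Tw w * Tgen K q n i = (q - 1) • Tw w + q • Tw (w * sgen i) := by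
  have hw : Tw (w * sgen i) * Tgen K q n i = Tw w := by
    rw [hTw.Tw_mul_Tgen_of_ascent (by simpa [mul_assoc] using h)]
    simp [mul_assoc]
  calc Tw w * Tgen K q n i = Tw (w * sgen i) * (Tgen K q n i * Tgen K q n i) := by
        rw [← hw, mul_assoc]
    _ = (q - 1) • Tw w + q • Tw (w * sgen i) := by
        rw [Tgen_mul_self, mul_add, mul_smul_comm, mul_smul_comm, mul_one, hw]

lemma IsTBasis.mul_Tgen_mem_span (hTw : IsTBasis K q n Tw) {x : Hecke K q n}
    (hx : x ∈ Submodule.span K (Set.range Tw)) (i : Fin n) :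
    x * Tgen K q n i ∈ Submodule.span K (Set.range Tw) := by
  have hTw_mem (w) : Tw w ∈ Submodule.span K (Set.range Tw) := Submodule.subset_span ⟨w, rfl⟩
  induction hx using Submodule.span_induction with
  | mem x hx =>
    obtain ⟨w, rfl⟩ := hx
    rcases len_mul_sgen_eq_or w i with h | h
    · rw [hTw.Tw_mul_Tgen_of_ascent h]
      exact hTw_mem _
    · rw [hTw.Tw_mul_Tgen_of_descent h]
      exact add_mem (Submodule.smul_mem _ _ (hTw_mem _)) (Submodule.smul_mem _ _ (hTw_mem _))
  | zero => simp
  | add x y _ _ hx hy => simpa [add_mul] using add_mem hx hy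
  | smul a x _ hx => simpa [smul_mul_assoc] using Submodule.smul_mem _ a hx

/-- The span of the `T_w` contains `1 = T_1` and is stable under right multiplication by the
generators, hence under right multiplication by anything. -/
lemma IsTBasis.span_eq_top (hTw : IsTBasis K q n Tw) :
    Submodule.span K (Set.range Tw) = ⊤ := by
  rw [eq_top_iff]
  rintro h -
  obtain ⟨a, rfl⟩ := RingQuot.mkAlgHom_surjective K (HeckeRel K q n) h
  suffices ∀ x ∈ Submodule.span K (Set.range Tw),
      x * RingQuot.mkAlgHom K (HeckeRel K q n) a ∈ Submodule.span K (Set.range Tw) by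
    simpa [hTw.Tw_one] using this (Tw 1) (Submodule.subset_span ⟨1, rfl⟩)
  induction a using FreeAlgebra.induction with
  | grade0 r =>
    intro x hx
    rw [AlgHom.commutes, ← Algebra.commutes, ← Algebra.smul_def]
    exact Submodule.smul_mem _ r hx
  | grade1 i => exact fun x hx => hTw.mul_Tgen_mem_span hx i
  | mul a b ha hb =>
    intro x hx
    rw [map_mul, ← mul_assoc]
    exact hb _ (ha x hx)
  | add a b ha hb =>
    intro x hx
    rw [map_add, mul_add]
    exact add_mem (ha x hx) (hb x hx)

end Hecke

section Form

variable {K : Type} [Field K] {q : K} {n : ℕ} {Tw : Equiv.Perm (Fin (n + 1)) → Hecke K q n}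
  {B : Hecke K q n →ₗ[K] Hecke K q n →ₗ[K] K}

lemma form_Tw_mul_Tw_Tw_one (hTw : IsTBasis K q n Tw)
    (hB : ∀ u v, B (Tw u) (Tw v) = if u = v then q ^ len u else 0)
    (u v : Equiv.Perm (Fin (n + 1))) :
    B (Tw u * Tw v) (Tw 1) = if u * v = 1 then q ^ len u else 0 := by
  induction h : len v using Nat.strong_induction_on generalizing u v with
  | _ k ih =>
  subst h
  by_cases hv : v = 1
  · rw [hv, hTw.Tw_one, mul_one, mul_one, ← hTw.Tw_one, hB]
  obtain ⟨i, hi⟩ := exists_left_descent hv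
  set v' := sgen i * v
  have hv' : v = sgen i * v' := by simp [v', ← mul_assoc]
  have hTv : Tw v = Tgen K q n i * Tw v' := by
    rw [hTw.Tgen_mul_Tw_of_ascent (by rw [← hv']; omega), ← hv']
  rw [hTv, ← mul_assoc, hv', ← mul_assoc]
  rcases len_mul_sgen_eq_or u i with hu | hu
  · rw [hTw.Tw_mul_Tgen_of_ascent hu, ih (len v') (by omega) _ _ rfl]
    split_ifs with h1
    · have hlen₁ := len_eq_of_mul_eq_one h1
      have hlen₂ := len_eq_of_mul_eq_one (show u * v = 1 by rwa [hv', ← mul_assoc])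
      omega
    · rfl
  · have huv' : u * v' ≠ 1 := fun h1 => by
      have hlen₁ := len_eq_of_mul_eq_one h1
      have hlen₂ := len_eq_of_mul_eq_one
        (show u * sgen i * v = 1 by simpa [v', mul_assoc] using h1)
      omega
    rw [hTw.Tw_mul_Tgen_of_descent hu, add_mul, smul_mul_assoc, smul_mul_assoc, map_add,
      map_smul, map_smul, LinearMap.add_apply, LinearMap.smul_apply, LinearMap.smul_apply,
      ih (len v') (by omega) _ _ rfl, ih (len v') (by omega) _ _ rfl, if_neg huv']
    split_ifs
    · rw [hu, pow_succ]
      ring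
    · simp

lemma form_mul_Tw_one_comm (hTw : IsTBasis K q n Tw)
    (hB : ∀ u v, B (Tw u) (Tw v) = if u = v then q ^ len u else 0) (a b : Hecke K q n) :
    B (a * b) (Tw 1) = B (b * a) (Tw 1) := by
  have h : (LinearMap.mul K (Hecke K q n)).compr₂ (B.flip (Tw 1)) =
      (LinearMap.mul K (Hecke K q n)).flip.compr₂ (B.flip (Tw 1)) := by
    refine LinearMap.ext_on_range hTw.span_eq_top fun u =>
      LinearMap.ext_on_range hTw.span_eq_top fun v => ?_
    simp only [LinearMap.compr₂_apply, LinearMap.flip_apply, LinearMap.mul_apply',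
      form_Tw_mul_Tw_Tw_one hTw hB, mul_eq_one_comm (a := v)]
    split_ifs with h
    · rw [len_eq_of_mul_eq_one h]
    · rfl
  exact LinearMap.congr_fun₂ h a b

lemma form_star_eq_form_mul_Tw_one (hTw : IsTBasis K q n Tw)
    (hB : ∀ u v, B (Tw u) (Tw v) = if u = v then q ^ len u else 0)
    {star : Hecke K q n →ₗ[K] Hecke K q n} (hstar : ∀ w, star (Tw w) = Tw w⁻¹)
    (a b : Hecke K q n) :
    B a (star b) = B (a * b) (Tw 1) := by
  have h : B.compl₂ star = (LinearMap.mul K (Hecke K q n)).compr₂ (B.flip (Tw 1)) := by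
    refine LinearMap.ext_on_range hTw.span_eq_top fun u =>
      LinearMap.ext_on_range hTw.span_eq_top fun v => ?_
    simp only [LinearMap.compl₂_apply, LinearMap.compr₂_apply, LinearMap.flip_apply,
      LinearMap.mul_apply', hstar, hB, form_Tw_mul_Tw_Tw_one hTw hB, eq_inv_iff_mul_eq_one]
  exact LinearMap.congr_fun₂ h a b

lemma eq_zero_of_forall_form_Tw_eq_zero (hq : q ≠ 0) (hTw : IsTBasis K q n Tw)
    (hB : ∀ u v, B (Tw u) (Tw v) = if u = v then q ^ len u else 0) {h : Hecke K q n}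
    (H : ∀ v, B h (Tw v) = 0) : h = 0 := by
  obtain ⟨c, rfl⟩ := (Submodule.mem_span_range_iff_exists_fun K).1
    (hTw.span_eq_top ▸ Submodule.mem_top : h ∈ Submodule.span K (Set.range Tw))
  have hc (v) : c v = 0 := by
    simpa [map_sum, hB, pow_ne_zero _ hq] using H v
  simp [hc]

end Form

/-- Let `(-,-)` be the bilinear form on `H = H_q(n+1)` with `(T_u, T_v) = δ_{u,v} q^{ℓ(u)}`
(`q ≠ 0`), and let `*` be the anti-automorphism with `T_w* = T_{w⁻¹}`. Then
`f(h₁, h₂) := (h₁, h₂*)` is a symmetric, associative, non-degenerate bilinear form;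
in particular `H_q(n+1)` is a symmetric algebra. -/
theorem hecke_symmetrizing_form (K : Type) [Field K] (q : K) (hq : q ≠ 0) (n : ℕ)
    (Tw : Equiv.Perm (Fin (n + 1)) → Hecke K q n) (hTw : IsTBasis K q n Tw)
    (B : Hecke K q n →ₗ[K] Hecke K q n →ₗ[K] K)
    (hB : ∀ u v : Equiv.Perm (Fin (n + 1)),
      B (Tw u) (Tw v) = if u = v then q ^ len u else 0)
    (star : Hecke K q n →ₗ[K] Hecke K q n)
    (hstar : ∀ w : Equiv.Perm (Fin (n + 1)), star (Tw w) = Tw w⁻¹) :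
    (∀ h₁ h₂ : Hecke K q n, B h₁ (star h₂) = B h₂ (star h₁)) ∧
      (∀ h₁ h₂ h₃ : Hecke K q n, B (h₁ * h₂) (star h₃) = B h₁ (star (h₂ * h₃))) ∧
      (∀ h₁ : Hecke K q n, (∀ h₂ : Hecke K q n, B h₁ (star h₂) = 0) → h₁ = 0) := by
  have hf := form_star_eq_form_mul_Tw_one hTw hB hstar
  refine ⟨fun h₁ h₂ => ?_, fun h₁ h₂ h₃ => ?_, fun h₁ H => ?_⟩
  · rw [hf, hf, form_mul_Tw_one_comm hTw hB]
  · rw [hf, hf, mul_assoc]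
  · exact eq_zero_of_forall_form_Tw_eq_zero hq hTw hB fun v => by
      simpa [hstar] using H (Tw v⁻¹)

end
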